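/- Let $M\in\mathbb{R}^{n\times n}$ with $\|M\|_2 \le C$ and $\|(M|_{j\times j})^{-1}\|_2 \le 1/\gamma$ for all $1\le j\le n$, and let $M = LU$ be the normalized $LU$-factorization. Then the diagonal entries of $U$ satisfy $|U_{jj}| \le C + C^2/\gamma$ for all $j$. (Proof via the $2\times 2$ block Schur complement: $U_{jj} = M_{jj} - M_{j,1:j-1}(M|_{(j-1)\times(j-1)})^{-1} M_{1:j-1,j}$.) -/

import Mathlib

/-
Row `j` of `L⁻¹` is again unit lower triangular, so reading row `j` of `L⁻¹ M = U` gives the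
Schur complement formula `U_jj = M_jj - r B⁻¹ c`, where `B` is the leading `j × j` block of `M`
and `r`, `c` are the first `j` entries of row and column `j` of `M`. Now `r B⁻¹ c` is the entry of
the `1 × 1` product `R B⁻¹ K` of submatrices `R`, `K` of `M`; the spectral norm is submultiplicative
and does not increase under passing to submatrices, so `|r B⁻¹ c| ≤ C · γ⁻¹ · C`, while
`|M_jj| ≤ C`.
-/

open Matrix

/-- The spectral (ℓ²-operator) norm of a real matrix. -/
noncomputable def specNorm {m n : ℕ} (M : Matrix (Fin m) (Fin n) ℝ) : ℝ :=
  ‖LinearMap.toContinuousLinearMap (Matrix.toEuclideanLin M)‖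

/-- The upper-left `j × j` principal submatrix of `M`. -/
def psub {n : ℕ} (M : Matrix (Fin n) (Fin n) ℝ) (j : ℕ) (h : j ≤ n) :
    Matrix (Fin j) (Fin j) ℝ :=
  Matrix.of fun a b => M (Fin.castLE h a) (Fin.castLE h b)

/-- `L` is lower triangular. -/
def LowerTri {n : ℕ} (L : Matrix (Fin n) (Fin n) ℝ) : Prop :=
  ∀ i j : Fin n, i < j → L i j = 0

/-- `U` is upper triangular. -/
def UpperTri {n : ℕ} (U : Matrix (Fin n) (Fin n) ℝ) : Prop :=
  ∀ i j : Fin n, j < i → U i j = 0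

open scoped Matrix.Norms.L2Operator

namespace Matrix

variable {𝕜 : Type*} [RCLike 𝕜] {k l m n : Type*} [Fintype k] [Fintype l] [Fintype m] [Fintype n]

-- Not an equality: `‖1‖ = 0` when `n` is empty. In general `‖1‖ = ‖1‖ ^ 2` by the C⋆-identity.
lemma l2_opNorm_one_le [DecidableEq n] : ‖(1 : Matrix n n 𝕜)‖ ≤ 1 := by
  have h := l2_opNorm_conjTranspose_mul_self (1 : Matrix n n 𝕜)
  rw [conjTranspose_one, Matrix.one_mul] at h
  nlinarith [norm_nonneg (1 : Matrix n n 𝕜)]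

lemma l2_opNorm_one_submatrix_le [DecidableEq m] [DecidableEq k] {f : k → m}
    (hf : f.Injective) : ‖(1 : Matrix m m 𝕜).submatrix f id‖ ≤ 1 := by
  set P := (1 : Matrix m m 𝕜).submatrix f id
  have hP : Pᴴᴴ * Pᴴ = 1 := by
    rw [conjTranspose_conjTranspose, conjTranspose_submatrix, conjTranspose_one,
      ← submatrix_mul _ _ _ _ _ Function.bijective_id, Matrix.one_mul, submatrix_one _ hf]
  have h := l2_opNorm_conjTranspose_mul_self Pᴴ
  rw [hP, l2_opNorm_conjTranspose] at h
  nlinarith [l2_opNorm_one_le (𝕜 := 𝕜) (n := k), norm_nonneg P]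

lemma l2_opNorm_mul_mul_le [DecidableEq n] [DecidableEq l] [DecidableEq k]
    (A : Matrix m n 𝕜) (B : Matrix n l 𝕜) (C : Matrix l k 𝕜) :
    ‖A * B * C‖ ≤ ‖A‖ * ‖B‖ * ‖C‖ :=
  (l2_opNorm_mul _ _).trans (by gcongr; exact l2_opNorm_mul _ _)

lemma l2_opNorm_submatrix_le [DecidableEq m] [DecidableEq n] [DecidableEq k] [DecidableEq l]
    (A : Matrix m n 𝕜) {f : k → m} {g : l → n} (hf : f.Injective) (hg : g.Injective) :
    ‖A.submatrix f g‖ ≤ ‖A‖ := by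
  set P := (1 : Matrix m m 𝕜).submatrix f id
  set Q := (1 : Matrix n n 𝕜).submatrix g id
  have hPAQ : A.submatrix f g = P * A * Qᴴ := by
    have hP := one_submatrix_mul f (Equiv.refl m) A
    have hQ := mul_submatrix_one (Equiv.refl n) g (A.submatrix f id)
    simp only [Equiv.coe_refl, Equiv.refl_symm, Function.id_comp] at hP hQ
    rw [conjTranspose_submatrix, conjTranspose_one, hP, hQ, submatrix_submatrix]
    rfl
  calc ‖A.submatrix f g‖ ≤ ‖P‖ * ‖A‖ * ‖Qᴴ‖ := by
        rw [hPAQ]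
        exact l2_opNorm_mul_mul_le _ _ _
    _ ≤ 1 * ‖A‖ * 1 := by
        rw [l2_opNorm_conjTranspose]
        gcongr
        exacts [l2_opNorm_one_submatrix_le hf, l2_opNorm_one_submatrix_le hg]
    _ = ‖A‖ := by ring

lemma norm_apply_le_l2_opNorm [DecidableEq n] (A : Matrix m n 𝕜) (i : m) (j : n) :
    ‖A i j‖ ≤ ‖A‖ := by
  have h := l2_opNorm_mulVec A (EuclideanSpace.single j 1)
  simp only [EuclideanSpace.single, PiLp.norm_single, norm_one, mul_one] at h
  exact (PiLp.norm_apply_le _ i).trans (by simpa using h)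

end Matrix

lemma specNorm_eq_l2_opNorm {m n : ℕ} (M : Matrix (Fin m) (Fin n) ℝ) : specNorm M = ‖M‖ := rfl

lemma Fin.sum_eq_add_sum_castLE {α : Type*} [AddCommMonoid α] {n : ℕ} (g : Fin n → α)
    (j : Fin n) (hg : ∀ i, j < i → g i = 0) :
    ∑ i, g i = g j + ∑ i : Fin j, g (Fin.castLE j.isLt.le i) := by
  have hIio : Finset.univ.map (Fin.castLEEmb j.isLt.le) = Finset.Iio j := by
    ext i
    simp only [Finset.mem_map, Finset.mem_univ, true_and, Finset.mem_Iio, Fin.castLEEmb_apply]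
    exact ⟨fun ⟨a, ha⟩ => ha ▸ a.isLt, fun h => ⟨⟨i, h⟩, rfl⟩⟩
  rw [← Finset.sum_subset (Finset.subset_univ (Finset.Iic j))
      (fun i _ hi => hg i (by simpa using hi)),
    ← Finset.add_sum_Iio_eq_sum_Iic, ← hIio, Finset.sum_map]
  rfl

lemma LowerTri.isLowerTriangular {n : ℕ} {L : Matrix (Fin n) (Fin n) ℝ} (hL : LowerTri L) :
    L.IsLowerTriangular :=
  fun i j h => hL i j h

lemma LowerTri.inv {n : ℕ} {L : Matrix (Fin n) (Fin n) ℝ} (hL : LowerTri L) : LowerTri L⁻¹ := by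
  by_cases h : IsUnit L.det
  · have := L.invertibleOfIsUnitDet h
    exact fun i j hij => blockTriangular_inv_of_blockTriangular hL.isLowerTriangular hij
  · rw [nonsing_inv_apply_not_isUnit L h]
    exact fun _ _ _ => rfl

lemma LowerTri.det_eq_one {n : ℕ} {L : Matrix (Fin n) (Fin n) ℝ} (hL : LowerTri L)
    (hLdiag : ∀ i, L i i = 1) : L.det = 1 := by
  simp [det_of_isLowerTriangular L hL.isLowerTriangular, hLdiag]

lemma LowerTri.inv_apply_self {n : ℕ} {L : Matrix (Fin n) (Fin n) ℝ} (hL : LowerTri L)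
    (hLdiag : ∀ i, L i i = 1) (i : Fin n) : L⁻¹ i i = 1 := by
  have h := congrFun₂ (nonsing_inv_mul L (by simp [hL.det_eq_one hLdiag])) i i
  rwa [mul_apply, Finset.sum_eq_single i, hLdiag, mul_one, one_apply_eq] at h
  · intro k _ hki
    rcases lt_or_gt_of_ne hki with hlt | hgt
    · rw [hL k i hlt, mul_zero]
    · rw [hL.inv i k hgt, zero_mul]
  · exact fun h => absurd (Finset.mem_univ i) h

lemma lu_diag_eq_schur_complement {n : ℕ} {M L U : Matrix (Fin n) (Fin n) ℝ} (hL : LowerTri L)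
    (hLdiag : ∀ i, L i i = 1) (hU : UpperTri U) (hLU : M = L * U) (j : Fin n)
    (hB : IsUnit (psub M j j.isLt.le)) :
    U j j = M j j - (M.submatrix ![j] (Fin.castLE j.isLt.le) * (psub M j j.isLt.le)⁻¹ *
      M.submatrix (Fin.castLE j.isLt.le) ![j]) 0 0 := by
  set e := Fin.castLE j.isLt.le
  set B := psub M j j.isLt.le
  set r : Fin j → ℝ := fun k => M j (e k)
  set v : Fin j → ℝ := fun i => L⁻¹ j (e i)
  have hUL : U = L⁻¹ * M := by
    rw [hLU, nonsing_inv_mul_cancel_left L U (by simp [hL.det_eq_one hLdiag])]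
  have hrow : ∀ k, U j k = M j k + ∑ i, v i * M (e i) k := by
    intro k
    rw [hUL, mul_apply,
      Fin.sum_eq_add_sum_castLE _ j (fun i hi => by rw [hL.inv j i hi, zero_mul]),
      hL.inv_apply_self hLdiag, one_mul]
  have hvB : v ᵥ* B = -r := by
    funext k
    have h := hrow (e k)
    rw [hU j (e k) k.isLt] at h
    change ∑ i, v i * M (e i) (e k) = -M j (e k)
    linear_combination -h
  have hv : v = -(r ᵥ* B⁻¹) := by
    calc v = (v ᵥ* B) ᵥ* B⁻¹ := by
          rw [vecMul_vecMul, mul_nonsing_inv B ((isUnit_iff_isUnit_det B).mp hB), vecMul_one]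
      _ = -(r ᵥ* B⁻¹) := by rw [hvB, neg_vecMul]
  rw [hrow j]
  change M j j + v ⬝ᵥ (fun i => M (e i) j) = M j j - (r ᵥ* B⁻¹) ⬝ᵥ (fun i => M (e i) j)
  rw [hv, neg_dotProduct, sub_eq_add_neg]

theorem stmt_11_general (n : ℕ) (C γ : ℝ) (hγ : 0 < γ)
    (M L U : Matrix (Fin n) (Fin n) ℝ) (hM : specNorm M ≤ C)
    (hinv : ∀ (j : ℕ) (h : j ≤ n), 1 ≤ j →
      IsUnit (psub M j h) ∧ specNorm (psub M j h)⁻¹ ≤ 1 / γ)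
    (hL : LowerTri L) (hLdiag : ∀ i, L i i = 1) (hU : UpperTri U) (hLU : M = L * U) :
    ∀ j : Fin n, |U j j| ≤ C + C ^ 2 / γ := by
  intro j
  set e := Fin.castLE j.isLt.le
  set B := psub M j j.isLt.le
  obtain ⟨hB, hBinv⟩ : IsUnit B ∧ ‖B⁻¹‖ ≤ 1 / γ := by
    rcases Nat.eq_zero_or_pos j with hj | hj
    · have : IsEmpty (Fin j) := hj ▸ Fin.isEmpty'
      rw [Subsingleton.elim B⁻¹ 0, norm_zero]
      exact ⟨isUnit_of_subsingleton B, one_div_nonneg.mpr hγ.le⟩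
    · exact hinv j _ hj
  rw [specNorm_eq_l2_opNorm] at hM
  have hC : 0 ≤ C := (norm_nonneg M).trans hM
  have hsub : ∀ {k l : ℕ} {f : Fin k → Fin n} {g : Fin l → Fin n}, f.Injective → g.Injective →
      ‖M.submatrix f g‖ ≤ C := fun hf hg => (l2_opNorm_submatrix_le M hf hg).trans hM
  have hschur : ‖(M.submatrix ![j] e * B⁻¹ * M.submatrix e ![j]) 0 0‖ ≤ C * (1 / γ) * C :=
    calc _ ≤ ‖M.submatrix ![j] e‖ * ‖B⁻¹‖ * ‖M.submatrix e ![j]‖ :=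
          (norm_apply_le_l2_opNorm _ 0 0).trans (l2_opNorm_mul_mul_le _ _ _)
      _ ≤ C * (1 / γ) * C := by
          gcongr
          exacts [hsub (Function.injective_of_subsingleton _) (Fin.castLE_injective _),
            hsub (Fin.castLE_injective _) (Function.injective_of_subsingleton _)]
  rw [lu_diag_eq_schur_complement hL hLdiag hU hLU j hB]
  calc _ ≤ ‖M j j‖ + ‖(M.submatrix ![j] e * B⁻¹ * M.submatrix e ![j]) 0 0‖ := norm_sub_le _ _
    _ ≤ C + C * (1 / γ) * C := add_le_add ((norm_apply_le_l2_opNorm M j j).trans hM) hschur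
    _ = C + C ^ 2 / γ := by ring

/-- diagonal bound via the `2×2` Schur complement: under the spectral
bounds on `M` and its principal submatrix inverses, `|U_{jj}| ≤ C + C²/γ`. -/
theorem stmt_11 (n : ℕ) (C γ : ℝ) (hC : 0 < C) (hγ : 0 < γ)
    (M L U : Matrix (Fin n) (Fin n) ℝ) (hM : specNorm M ≤ C)
    (hinv : ∀ (j : ℕ) (h : j ≤ n), 1 ≤ j →
      IsUnit (psub M j h) ∧ specNorm (psub M j h)⁻¹ ≤ 1 / γ)
    (hL : LowerTri L) (hLdiag : ∀ i, L i i = 1) (hU : UpperTri U) (hLU : M = L * U) :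
    ∀ j : Fin n, |U j j| ≤ C + C ^ 2 / γ :=
  stmt_11_general n C γ hγ M L U hM hinv hL hLdiag hU hLU
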